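/- arXiv:2512.24999 — 2 statements merged into one kernel-verified Lean document; each statement's English description precedes it below -/
import Mathlib

section
/- Let f : ℝ^d → ℝ be convex, differentiable, and L-smooth for some L > 0, and let (θ_t) be gradient descent iterates θ_{t+1} = θ_t − η_t ∇f(θ_t) with step sizes η_t ∈ (0, 1/L]. Let S := {θ* ∈ ℝ^d : f(θ*) = inf_{θ ∈ ℝ^d} f(θ)}. If S is a non-empty affine subspace of ℝ^d and Σ_{t=0}^∞ η_t = ∞, then θ_t converges to Proj_S(θ_0), the Euclidean projection of the initialization θ_0 onto S. -/
open Finset Filter Topology Set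
open scoped RealInnerProductSpace

/-! The gradient of a convex `L`-smooth function is `1/L`-cocoercive (Baillon–Haddad). For a
cocoercive map, steps of size at most `1/L` are Fejér monotone towards every zero and do not
increase `‖∇f (θ t)‖`, so `∑ η t = ∞` forces the gradients to vanish; a cluster point of the
bounded iterates is then a minimizer `p`, and Fejér monotonicity upgrades this to convergence.
Since the minimizers form an affine subspace, convexity makes every gradient orthogonal to its
direction, so `θ t - θ 0`, and in the limit `p - θ 0`, is orthogonal to `p - s` for every
minimizer `s`; by Pythagoras `p` is the minimizer closest to `θ 0`. -/

section Differentiable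

variable {E : Type*} [NormedAddCommGroup E] [InnerProductSpace ℝ E] [CompleteSpace E] {f : E → ℝ}

lemma hasDerivAt_comp_add_smul {x v : E} {t : ℝ} (hf : DifferentiableAt ℝ f (x + t • v)) :
    HasDerivAt (fun s : ℝ => f (x + s • v)) ⟪gradient f (x + t • v), v⟫ t := by
  have hline : HasDerivAt (fun s : ℝ => x + s • v) v t := by
    simpa using ((hasDerivAt_id t).smul_const v).const_add x
  simpa [Function.comp_def] using hf.hasGradientAt.hasFDerivAt.comp_hasDerivAt t hline

lemma gradient_eq_zero_of_forall_le {s : E} (hs : ∀ x, f s ≤ f x) : gradient f s = 0 := by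
  simp [gradient, IsLocalMin.fderiv_eq_zero (Eventually.of_forall hs)]

lemma ConvexOn.add_inner_gradient_le (hconv : ConvexOn ℝ univ f) (hdiff : Differentiable ℝ f)
    (x y : E) : f x + ⟪gradient f x, y - x⟫ ≤ f y := by
  have hline : ConvexOn ℝ univ (fun t : ℝ => f (x + t • (y - x))) := by
    have hcomp : (fun t : ℝ => f (x + t • (y - x))) = f ∘ AffineMap.lineMap x y :=
      funext fun t => by simp [AffineMap.lineMap_apply_module', add_comm]
    simpa [hcomp] using hconv.comp_affineMap (AffineMap.lineMap x y)
  have hderiv := hasDerivAt_comp_add_smul (x := x) (v := y - x) (t := 0) (hdiff _)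
  simp only [zero_smul, add_zero] at hderiv
  have := hline.le_slope_of_hasDerivAt (mem_univ 0) (mem_univ 1) one_pos hderiv
  simp only [slope_def_field, one_smul, add_sub_cancel, zero_smul, add_zero, sub_zero,
    div_one] at this
  linarith

lemma ConvexOn.gradient_eq_zero_iff (hconv : ConvexOn ℝ univ f) (hdiff : Differentiable ℝ f)
    (p : E) : gradient f p = 0 ↔ ∀ x, f p ≤ f x :=
  ⟨fun hp x => by simpa [hp] using hconv.add_inner_gradient_le hdiff p x,
    gradient_eq_zero_of_forall_le⟩

lemma ConvexOn.inner_gradient_eq_zero_of_bddAbove_line (hconv : ConvexOn ℝ univ f)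
    (hdiff : Differentiable ℝ f) {y v : E} {B : ℝ} (hB : ∀ c : ℝ, f (y + c • v) ≤ B) (x : E) :
    ⟪gradient f x, v⟫ = 0 := by
  set a := ⟪gradient f x, v⟫
  have hlin : ∀ c : ℝ, c * a ≤ B - f x - ⟪gradient f x, y - x⟫ := fun c => by
    have := hconv.add_inner_gradient_le hdiff x (y + c • v)
    rw [show y + c • v - x = (y - x) + c • v by abel, inner_add_right,
      real_inner_smul_right] at this
    linarith [hB c]
  by_contra ha
  have := hlin ((B - f x - ⟪gradient f x, y - x⟫ + 1) / a)
  rw [div_mul_cancel₀ _ ha] at this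
  linarith

lemma le_add_inner_gradient_add_mul_norm_sq (hdiff : Differentiable ℝ f) {L : ℝ}
    (hsmooth : ∀ x y, ‖gradient f x - gradient f y‖ ≤ L * ‖x - y‖) (x y : E) :
    f y ≤ f x + ⟪gradient f x, y - x⟫ + L / 2 * ‖y - x‖ ^ 2 := by
  set v := y - x
  set ψ : ℝ → ℝ := fun t => f (x + t • v) - t * ⟪gradient f x, v⟫ - L * t ^ 2 / 2 * ‖v‖ ^ 2
  have hψ : ∀ t, HasDerivAt ψ
      (⟪gradient f (x + t • v) - gradient f x, v⟫ - L * t * ‖v‖ ^ 2) t := fun t => by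
    have hlin := (hasDerivAt_id t).mul_const ⟪gradient f x, v⟫
    have hquad := (((hasDerivAt_pow 2 t).const_mul L).div_const 2).mul_const (‖v‖ ^ 2)
    refine (((hasDerivAt_comp_add_smul (hdiff (x + t • v))).sub hlin).sub hquad).congr_deriv ?_
    rw [inner_sub_left]
    push_cast
    ring
  have hanti : AntitoneOn ψ (Icc 0 1) := by
    refine antitoneOn_of_hasDerivWithinAt_nonpos (convex_Icc 0 1)
      (HasDerivAt.continuousOn fun t _ => hψ t) (fun t _ => (hψ t).hasDerivWithinAt) ?_
    intro t ht
    rw [interior_Icc] at ht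
    have : ⟪gradient f (x + t • v) - gradient f x, v⟫ ≤ L * t * ‖v‖ ^ 2 :=
      calc _ ≤ ‖gradient f (x + t • v) - gradient f x‖ * ‖v‖ := real_inner_le_norm _ _
        _ ≤ L * ‖x + t • v - x‖ * ‖v‖ := by gcongr; exact hsmooth _ _
        _ = L * t * ‖v‖ ^ 2 := by
          rw [add_sub_cancel_left, norm_smul, Real.norm_of_nonneg ht.1.le]; ring
    linarith
  have := hanti (left_mem_Icc.2 zero_le_one) (right_mem_Icc.2 zero_le_one) zero_le_one
  simp only [ψ, v, one_smul, add_sub_cancel, zero_smul, add_zero] at this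
  linarith

lemma ConvexOn.add_inner_gradient_add_norm_sq_le (hconv : ConvexOn ℝ univ f)
    (hdiff : Differentiable ℝ f) {L : ℝ} (hL : 0 < L)
    (hsmooth : ∀ x y, ‖gradient f x - gradient f y‖ ≤ L * ‖x - y‖) (x y : E) :
    f x + ⟪gradient f x, y - x⟫ + 1 / (2 * L) * ‖gradient f y - gradient f x‖ ^ 2 ≤ f y := by
  set u := gradient f y - gradient f x
  -- `y - L⁻¹ • u` is the gradient step from `y` for `z ↦ f z - ⟪∇f x, z⟫`, minimal at `x`
  have hfoc := hconv.add_inner_gradient_le hdiff x (y - L⁻¹ • u)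
  have hdesc := le_add_inner_gradient_add_mul_norm_sq hdiff hsmooth y (y - L⁻¹ • u)
  rw [sub_sub_cancel_left, inner_neg_right, norm_neg, norm_smul, Real.norm_of_nonneg
    (inv_nonneg.2 hL.le), inner_smul_right] at hdesc
  rw [sub_right_comm, inner_sub_right, inner_smul_right] at hfoc
  have hu : ⟪gradient f y, u⟫ - ⟪gradient f x, u⟫ = ‖u‖ ^ 2 := by
    rw [← inner_sub_left, real_inner_self_eq_norm_sq]
  have h1 : L / 2 * (L⁻¹ * ‖u‖) ^ 2 = 1 / (2 * L) * ‖u‖ ^ 2 := by field_simp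
  have h2 : L⁻¹ * ⟪gradient f y, u⟫ - L⁻¹ * ⟪gradient f x, u⟫ = 2 * (1 / (2 * L) * ‖u‖ ^ 2) := by
    rw [← mul_sub, hu]; field_simp
  linarith

end Differentiable

section Cocoercive

variable {E : Type*} [NormedAddCommGroup E] [InnerProductSpace ℝ E]

def Cocoercive (β : ℝ) (g : E → E) : Prop :=
  ∀ x y, β * ‖g x - g y‖ ^ 2 ≤ ⟪g x - g y, x - y⟫

/-- Baillon–Haddad. -/
lemma ConvexOn.cocoercive_gradient [CompleteSpace E] {f : E → ℝ} (hconv : ConvexOn ℝ univ f)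
    (hdiff : Differentiable ℝ f) {L : ℝ} (hL : 0 < L)
    (hsmooth : ∀ x y, ‖gradient f x - gradient f y‖ ≤ L * ‖x - y‖) :
    Cocoercive (1 / L) (gradient f) := fun x y => by
  have hxy := hconv.add_inner_gradient_add_norm_sq_le hdiff hL hsmooth x y
  have hyx := hconv.add_inner_gradient_add_norm_sq_le hdiff hL hsmooth y x
  have hsum : ⟪gradient f x - gradient f y, x - y⟫ =
      -(⟪gradient f x, y - x⟫ + ⟪gradient f y, x - y⟫) := by
    rw [inner_sub_left, ← neg_sub x y, inner_neg_right]; ring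
  have hhalf : 1 / L = 2 * (1 / (2 * L)) := by field_simp
  rw [norm_sub_rev] at hxy
  rw [hsum, hhalf]
  linarith

variable {β : ℝ} {g : E → E}

lemma Cocoercive.lipschitzWith (hg : Cocoercive β g) (hβ : 0 < β) :
    LipschitzWith (Real.toNNReal β⁻¹) g := by
  refine LipschitzWith.of_dist_le' fun x y => ?_
  rw [dist_eq_norm, dist_eq_norm, ← div_eq_inv_mul, le_div_iff₀ hβ]
  rcases (norm_nonneg (g x - g y)).eq_or_lt with h0 | hpos
  · rw [← h0, zero_mul]; exact norm_nonneg _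
  refine le_of_mul_le_mul_left ?_ hpos
  calc ‖g x - g y‖ * (‖g x - g y‖ * β) = β * ‖g x - g y‖ ^ 2 := by ring
    _ ≤ ⟪g x - g y, x - y⟫ := hg x y
    _ ≤ ‖g x - g y‖ * ‖x - y‖ := real_inner_le_norm _ _

lemma Cocoercive.norm_sub_smul_sub_sq_le (hg : Cocoercive β g) {s : E} (hs : g s = 0) {η : ℝ}
    (hη : 0 ≤ η) (x : E) :
    ‖x - η • g x - s‖ ^ 2 ≤ ‖x - s‖ ^ 2 - η * (2 * β - η) * ‖g x‖ ^ 2 := by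
  have hcoco := hg x s
  rw [hs, sub_zero] at hcoco
  rw [sub_right_comm, norm_sub_sq_real, inner_smul_right, norm_smul, Real.norm_of_nonneg hη,
    real_inner_comm]
  nlinarith [mul_le_mul_of_nonneg_left hcoco hη]

lemma Cocoercive.norm_apply_sub_smul_le (hg : Cocoercive β g) {η : ℝ} (hη : 0 < η)
    (hηβ : η ≤ 2 * β) (x : E) : ‖g (x - η • g x)‖ ≤ ‖g x‖ := by
  set Δ := g (x - η • g x) - g x
  have hcoco := hg (x - η • g x) x
  rw [sub_sub_cancel_left, inner_neg_right, inner_smul_right] at hcoco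
  have hsq : ‖g x + Δ‖ ^ 2 ≤ ‖g x‖ ^ 2 := by
    rw [norm_add_sq_real, real_inner_comm]
    nlinarith [mul_le_mul_of_nonneg_right hηβ (sq_nonneg ‖Δ‖)]
  rw [add_sub_cancel] at hsq
  exact (sq_le_sq₀ (norm_nonneg _) (norm_nonneg _)).1 hsq

end Cocoercive

section GradientIteration

variable {E : Type*} [NormedAddCommGroup E] [InnerProductSpace ℝ E] {β : ℝ} {g : E → E}
  {η : ℕ → ℝ} {θ : ℕ → E}

lemma Cocoercive.norm_sub_sq_succ_add_le (hg : Cocoercive β g)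
    (hupd : ∀ t, θ (t + 1) = θ t - η t • g (θ t)) (hη : ∀ t, 0 < η t ∧ η t ≤ β) {s : E}
    (hs : g s = 0) (t : ℕ) : ‖θ (t + 1) - s‖ ^ 2 + β * η t * ‖g (θ t)‖ ^ 2 ≤ ‖θ t - s‖ ^ 2 := by
  have hstep := hg.norm_sub_smul_sub_sq_le hs (hη t).1.le (θ t)
  rw [← hupd] at hstep
  have hgain : β * η t ≤ η t * (2 * β - η t) := by nlinarith [hη t]
  nlinarith [mul_le_mul_of_nonneg_right hgain (sq_nonneg ‖g (θ t)‖)]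

lemma Cocoercive.antitone_dist (hg : Cocoercive β g)
    (hupd : ∀ t, θ (t + 1) = θ t - η t • g (θ t)) (hη : ∀ t, 0 < η t ∧ η t ≤ β) {s : E}
    (hs : g s = 0) : Antitone fun t => dist (θ t) s := by
  refine antitone_nat_of_succ_le fun t => ?_
  have hstep := hg.norm_sub_sq_succ_add_le hupd hη hs t
  have hβ : 0 ≤ β := (hη t).1.le.trans (hη t).2
  rw [dist_eq_norm, dist_eq_norm, ← sq_le_sq₀ (norm_nonneg _) (norm_nonneg _)]
  nlinarith [mul_nonneg (mul_nonneg hβ (hη t).1.le) (sq_nonneg ‖g (θ t)‖)]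

lemma Cocoercive.mul_sum_le (hg : Cocoercive β g)
    (hupd : ∀ t, θ (t + 1) = θ t - η t • g (θ t)) (hη : ∀ t, 0 < η t ∧ η t ≤ β) {s : E}
    (hs : g s = 0) (T : ℕ) :
    β * ∑ t ∈ range T, η t * ‖g (θ t)‖ ^ 2 ≤ ‖θ 0 - s‖ ^ 2 - ‖θ T - s‖ ^ 2 := by
  induction T with
  | zero => simp
  | succ T ih =>
    rw [sum_range_succ, mul_add]
    linarith [hg.norm_sub_sq_succ_add_le hupd hη hs T]

lemma Cocoercive.antitone_norm_apply (hg : Cocoercive β g)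
    (hupd : ∀ t, θ (t + 1) = θ t - η t • g (θ t)) (hη : ∀ t, 0 < η t ∧ η t ≤ β) :
    Antitone fun t => ‖g (θ t)‖ :=
  antitone_nat_of_succ_le fun t => by
    rw [hupd]
    exact hg.norm_apply_sub_smul_le (hη t).1 (by linarith [(hη t).1, (hη t).2]) _

/-- Since `‖g (θ t)‖` is antitone, `β ‖g (θ T)‖² ∑_{t<T} η t ≤ ‖θ 0 - s‖²`. -/
lemma Cocoercive.tendsto_apply_zero (hg : Cocoercive β g)
    (hupd : ∀ t, θ (t + 1) = θ t - η t • g (θ t)) (hη : ∀ t, 0 < η t ∧ η t ≤ β) {s : E}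
    (hs : g s = 0) (hdiv : Tendsto (fun T => ∑ t ∈ range T, η t) atTop atTop) :
    Tendsto (fun t => g (θ t)) atTop (𝓝 0) := by
  have hβ : 0 < β := (hη 0).1.trans_le (hη 0).2
  have hbound : ∀ T, ‖g (θ T)‖ ^ 2 * ∑ t ∈ range T, η t ≤ ‖θ 0 - s‖ ^ 2 / β := fun T => by
    rw [le_div_iff₀ hβ, mul_sum]
    calc (∑ t ∈ range T, ‖g (θ T)‖ ^ 2 * η t) * β
        ≤ (∑ t ∈ range T, η t * ‖g (θ t)‖ ^ 2) * β := by
          refine mul_le_mul_of_nonneg_right (sum_le_sum fun t ht => ?_) hβ.le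
          rw [mul_comm]
          have hmono := hg.antitone_norm_apply hupd hη (mem_range.1 ht).le
          gcongr
          exact (hη t).1.le
      _ ≤ ‖θ 0 - s‖ ^ 2 := by
          nlinarith [hg.mul_sum_le hupd hη hs T, sq_nonneg ‖θ T - s‖]
  have hsq : Tendsto (fun T => ‖g (θ T)‖ ^ 2) atTop (𝓝 0) := by
    refine squeeze_zero' (Eventually.of_forall fun T => sq_nonneg _) ?_
      ((tendsto_const_nhds (x := ‖θ 0 - s‖ ^ 2 / β)).div_atTop hdiv)
    filter_upwards [hdiv.eventually_gt_atTop 0] with T hT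
    rw [le_div_iff₀ hT]
    exact hbound T
  rw [tendsto_zero_iff_norm_tendsto_zero]
  simpa [Real.sqrt_sq (norm_nonneg _)] using hsq.sqrt

/-- Fejér monotonicity towards the zeros of `g`, plus a zero among the cluster points. -/
lemma Cocoercive.exists_tendsto [ProperSpace E] (hg : Cocoercive β g)
    (hupd : ∀ t, θ (t + 1) = θ t - η t • g (θ t)) (hη : ∀ t, 0 < η t ∧ η t ≤ β) {s : E}
    (hs : g s = 0) (hdiv : Tendsto (fun T => ∑ t ∈ range T, η t) atTop atTop) :
    ∃ p, g p = 0 ∧ Tendsto θ atTop (𝓝 p) := by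
  have hβ : 0 < β := (hη 0).1.trans_le (hη 0).2
  obtain ⟨p, -, φ, hφ, hθφ⟩ := tendsto_subseq_of_bounded Metric.isBounded_closedBall
    fun t => Metric.mem_closedBall.2 (hg.antitone_dist hupd hη hs (Nat.zero_le t))
  have hp : g p = 0 := tendsto_nhds_unique
    (((hg.lipschitzWith hβ).continuous.tendsto p).comp hθφ)
    ((hg.tendsto_apply_zero hupd hη hs hdiv).comp hφ.tendsto_atTop)
  refine ⟨p, hp, tendsto_iff_dist_tendsto_zero.2 ?_⟩
  exact (tendsto_iff_tendsto_subseq_of_antitone (hg.antitone_dist hupd hη hp)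
    hφ.tendsto_atTop).2 (tendsto_iff_dist_tendsto_zero.1 hθφ)

lemma inner_sub_eq_zero_of_tendsto (hupd : ∀ t, θ (t + 1) = θ t - η t • g (θ t)) {v p : E}
    (hv : ∀ x, ⟪g x, v⟫ = 0) (hθ : Tendsto θ atTop (𝓝 p)) : ⟪θ 0 - p, v⟫ = 0 := by
  have hinv : ∀ t, θ t ∈ {y | ⟪θ 0 - y, v⟫ = 0} := fun t => by
    induction t with
    | zero => simp
    | succ t ih =>
      simp only [mem_ofPred_eq, hupd, sub_sub_eq_add_sub, add_sub_right_comm, inner_add_left,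
        inner_smul_left, hv] at ih ⊢
      simp [ih]
  exact (isClosed_eq (continuous_const.sub continuous_id |>.inner continuous_const)
    continuous_const).mem_of_tendsto hθ (Eventually.of_forall hinv)

end GradientIteration

/-- **Minimum norm solution for gradient descent.**
For convex, differentiable, `L`-smooth `f` and gradient descent iterates with step sizes
`η t ∈ (0, 1/L]` satisfying `Σ η t = ∞`, if the set `S` of global minimizers is a nonempty
affine subspace (closed under affine combinations), then `θ t` converges to the Euclidean
projection of the initialization `θ 0` onto `S`. -/
theorem gd_min_norm_solution {d : ℕ} (f : EuclideanSpace ℝ (Fin d) → ℝ)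
    (L : ℝ) (hL : 0 < L)
    (hconv : ConvexOn ℝ Set.univ f) (hdiff : Differentiable ℝ f)
    (hsmooth : ∀ x y : EuclideanSpace ℝ (Fin d),
      ‖gradient f x - gradient f y‖ ≤ L * ‖x - y‖)
    (η : ℕ → ℝ) (hη : ∀ t, 0 < η t ∧ η t ≤ 1 / L)
    (θ : ℕ → EuclideanSpace ℝ (Fin d))
    (hupd : ∀ t, θ (t + 1) = θ t - η t • gradient f (θ t))
    (hS : ∃ s : EuclideanSpace ℝ (Fin d), ∀ x, f s ≤ f x)
    (haff : ∀ x y : EuclideanSpace ℝ (Fin d), (∀ u, f x ≤ f u) → (∀ u, f y ≤ f u) →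
      ∀ c : ℝ, ∀ u, f (c • x + (1 - c) • y) ≤ f u)
    (hdiv : Tendsto (fun T => ∑ t ∈ Finset.range T, η t) atTop atTop) :
    ∃ p : EuclideanSpace ℝ (Fin d),
      (∀ x, f p ≤ f x) ∧
      (∀ s : EuclideanSpace ℝ (Fin d), (∀ x, f s ≤ f x) → ‖θ 0 - p‖ ≤ ‖θ 0 - s‖) ∧
      Tendsto θ atTop (nhds p) := by
  obtain ⟨s₀, hs₀⟩ := hS
  obtain ⟨p, hp, hθp⟩ := (hconv.cocoercive_gradient hdiff hL hsmooth).exists_tendsto hupd hη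
    (gradient_eq_zero_of_forall_le hs₀) hdiv
  have hpmin := (hconv.gradient_eq_zero_iff hdiff p).1 hp
  refine ⟨p, hpmin, fun s hs => ?_, hθp⟩
  have hline : ∀ c : ℝ, f (s + c • (p - s)) ≤ f s := fun c => by
    convert haff p s hpmin hs c s using 2
    module
  have horth : ⟪θ 0 - p, p - s⟫ = 0 := inner_sub_eq_zero_of_tendsto hupd
    (hconv.inner_gradient_eq_zero_of_bddAbove_line hdiff hline) hθp
  have hpyth := norm_add_sq_eq_norm_sq_add_norm_sq_real horth
  rw [sub_add_sub_cancel] at hpyth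
  exact (mul_self_le_mul_self_iff (norm_nonneg _) (norm_nonneg _)).2
    (by nlinarith [mul_self_nonneg ‖p - s‖])
end

section
/- Let C ⊆ Ω be closed convex subsets of ℝ^d with nonempty interiors. Suppose (i) f : Ω → ℝ is convex on C and differentiable on int(Ω); (ii) φ : Ω → ℝ is of Legendre type and continuous on Ω; (iii) f is L-smooth with respect to a norm ‖·‖ on C ∩ int(Ω) for some L > 0; (iv) φ is α-strongly convex with respect to ‖·‖ on C for some α > 0. Let (θ_t) be mirror descent iterates θ_{t+1} = argmin_{θ ∈ C} ( η_t⟨∇f(θ_t), θ⟩ + D_φ(θ, θ_t) ) initialized at θ_0 ∈ C ∩ int(Ω) with step sizes η_t ∈ (0, α/L] (all iterates remain in C ∩ int(Ω), so the Bregman divergences are well-defined). Then for every z ∈ C and every integer T ≥ 1, f(θ_T) − f(z) ≤ ( D_φ(z, θ_0) − D_φ(z, θ_T) ) / ( Σ_{t=0}^{T−1} η_t ). -/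
open Finset Filter
open scoped RealInnerProductSpace

/-!
Each step satisfies `η t * (f (θ (t + 1)) - f z) ≤ D z (θ t) - D z (θ (t + 1))`: combine the
descent lemma for the `L`-smooth `f`, the gradient inequality for the convex `f`, the first-order
optimality condition of the step and the three-point identity for Bregman divergences; the
quadratic term `η t * L / 2 * N (θ (t + 1) - θ t) ^ 2` of the descent lemma is absorbed by
`D (θ (t + 1)) (θ t) ≥ α / 2 * N (θ (t + 1) - θ t) ^ 2` because `η t ≤ α / L`. Taking `z = θ t`
shows that `f ∘ θ` is nonincreasing, so the step inequalities telescope to the bound at `θ T`.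
-/

section

open Set AffineMap

variable {E : Type*} [NormedAddCommGroup E] [InnerProductSpace ℝ E] [CompleteSpace E]

theorem hasDerivAt_comp_lineMap {f : E → ℝ} {x y : E} {t : ℝ}
    (hf : DifferentiableAt ℝ f (lineMap x y t)) :
    HasDerivAt (fun s : ℝ ↦ f (lineMap x y s)) ⟪gradient f (lineMap x y t), y - x⟫ t := by
  have h := hf.hasGradientAt.hasFDerivAt.comp_hasDerivAt t (hasDerivAt_lineMap (a := x) (b := y))
  rwa [InnerProductSpace.toDual_apply_apply] at h

theorem ConvexOn.inner_gradient_sub_le {s : Set E} {f : E → ℝ} (hf : ConvexOn ℝ s f)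
    {x y : E} (hx : x ∈ s) (hy : y ∈ s) (hfx : DifferentiableAt ℝ f x) :
    ⟪gradient f x, y - x⟫ ≤ f y - f x := by
  have hline := (hf.comp_affineMap (lineMap x y)).le_slope_of_hasDerivAt
    (x := 0) (y := 1) (by simpa) (by simpa) one_pos
    (hasDerivAt_comp_lineMap (t := 0) (by simpa))
  simpa [slope_def_field] using hline

theorem sub_le_of_hasDerivAt_le_add_mul {g g' : ℝ → ℝ} {a b : ℝ}
    (hg : ∀ t ∈ Icc (0 : ℝ) 1, HasDerivAt g (g' t) t)
    (hg' : ∀ t ∈ Ioo (0 : ℝ) 1, g' t ≤ a + b * t) :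
    g 1 - g 0 ≤ a + b / 2 := by
  set ψ : ℝ → ℝ := fun t ↦ a * t + b / 2 * t ^ 2 - g t
  have hψ : ∀ t ∈ Icc (0 : ℝ) 1, HasDerivAt ψ (a + b * t - g' t) t := fun t ht ↦
    (((hasDerivAt_id t).const_mul a).add ((hasDerivAt_pow 2 t).const_mul (b / 2))
      |>.sub (hg t ht)).congr_deriv (by norm_num; ring)
  have hmono : MonotoneOn ψ (Icc 0 1) := by
    refine monotoneOn_of_hasDerivWithinAt_nonneg (convex_Icc 0 1)
      (fun t ht ↦ (hψ t ht).continuousAt.continuousWithinAt)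
      (fun t ht ↦ (hψ t (interior_subset ht)).hasDerivWithinAt) (fun t ht ↦ ?_)
    rw [interior_Icc] at ht
    linarith [hg' t ht]
  have := hmono (left_mem_Icc.2 zero_le_one) (right_mem_Icc.2 zero_le_one) zero_le_one
  simp only [ψ] at this
  linarith

theorem Convex.le_add_inner_gradient_add_of_lipschitz_gradient {s : Set E} (hs : Convex ℝ s)
    {f : E → ℝ} (hf : ∀ x ∈ s, DifferentiableAt ℝ f x) {N : E → ℝ}
    (hN : ∀ (c : ℝ) x, N (c • x) = |c| * N x) {L : ℝ}
    (hsmooth : ∀ x ∈ s, ∀ y ∈ s, ∀ u, ⟪gradient f x - gradient f y, u⟫ ≤ L * N (x - y) * N u)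
    {x y : E} (hx : x ∈ s) (hy : y ∈ s) :
    f y ≤ f x + ⟪gradient f x, y - x⟫ + L / 2 * N (y - x) ^ 2 := by
  have hderiv : ∀ t ∈ Icc (0 : ℝ) 1, HasDerivAt (fun t ↦ f (lineMap x y t))
      ⟪gradient f (lineMap x y t), y - x⟫ t := fun t ht ↦
    hasDerivAt_comp_lineMap (hf _ (hs.lineMap_mem hx hy ht))
  have hbound : ∀ t ∈ Ioo (0 : ℝ) 1, ⟪gradient f (lineMap x y t), y - x⟫ ≤
      ⟪gradient f x, y - x⟫ + L * N (y - x) ^ 2 * t := by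
    intro t ht
    have h := hsmooth _ (hs.lineMap_mem hx hy (Ioo_subset_Icc_self ht)) x hx (y - x)
    rw [inner_sub_left, show lineMap x y t - x = t • (y - x) from lineMap_vsub_left x y t, hN,
      abs_of_pos ht.1] at h
    linarith
  have h := sub_le_of_hasDerivAt_le_add_mul hderiv hbound
  simp only [lineMap_apply_zero, lineMap_apply_one] at h
  linarith

noncomputable def bregman (φ : E → ℝ) (u v : E) : ℝ := φ u - φ v - ⟪gradient φ v, u - v⟫

@[simp]
theorem bregman_self (φ : E → ℝ) (x : E) : bregman φ x x = 0 := by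
  simp [bregman]

theorem inner_gradient_sub_gradient_eq_bregman (φ : E → ℝ) (x y z : E) :
    ⟪gradient φ y - gradient φ x, z - y⟫ = bregman φ z x - bregman φ z y - bregman φ y x := by
  simp only [bregman, inner_sub_left, inner_sub_right]
  ring

theorem IsMinOn.inner_bregman_step_nonneg {C : Set E} (hC : Convex ℝ C) {φ : E → ℝ} {η : ℝ}
    {g x x' w : E} (hmin : IsMinOn (fun w ↦ η * ⟪g, w⟫ + bregman φ w x) C x')
    (hx' : x' ∈ C) (hw : w ∈ C) (hφ : DifferentiableAt ℝ φ x') :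
    0 ≤ η * ⟪g, w - x'⟫ + ⟪gradient φ x' - gradient φ x, w - x'⟫ := by
  have hinner : ∀ c : E, HasFDerivAt (fun w ↦ ⟪c, w - x⟫) (innerSL ℝ c) x' := fun c ↦ by
    simpa [inner_sub_right] using ((innerSL ℝ c).hasFDerivAt (x := x')).sub_const ⟪c, x⟫
  have hderiv := (((innerSL ℝ g).hasFDerivAt (x := x')).const_mul η).add
    ((hφ.hasGradientAt.hasFDerivAt.sub_const (φ x)).sub (hinner (gradient φ x)))
  have h := hmin.localize.hasFDerivWithinAt_nonneg hderiv.hasFDerivWithinAt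
    (sub_mem_posTangentConeAt_of_segment_subset (hC.segment_subset hx' hw))
  simpa [inner_sub_left] using h

theorem mirror_step_le {C U : Set E} (hC : Convex ℝ C) (hU : Convex ℝ U) {f φ : E → ℝ}
    (hf_conv : ConvexOn ℝ C f) (hf_diff : ∀ x ∈ U, DifferentiableAt ℝ f x)
    (hφ_diff : ∀ x ∈ U, DifferentiableAt ℝ φ x) {N : E → ℝ}
    (hN : ∀ (c : ℝ) x, N (c • x) = |c| * N x) {L α η : ℝ} (hL : 0 < L)
    (hf_smooth : ∀ x ∈ C ∩ U, ∀ y ∈ C ∩ U, ∀ u,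
      ⟪gradient f x - gradient f y, u⟫ ≤ L * N (x - y) * N u)
    (hφ_strong : ∀ x ∈ C ∩ U, ∀ y ∈ C,
      φ x + ⟪gradient φ x, y - x⟫ + α / 2 * N (y - x) ^ 2 ≤ φ y)
    (hη : 0 ≤ η) (hηα : η ≤ α / L) {x x' z : E} (hx : x ∈ C ∩ U) (hx' : x' ∈ C ∩ U)
    (hz : z ∈ C) (hmin : IsMinOn (fun w ↦ η * ⟪gradient f x, w⟫ + bregman φ w x) C x') :
    η * (f x' - f z) ≤ bregman φ z x - bregman φ z x' := by
  have hdescent := (hC.inter hU).le_add_inner_gradient_add_of_lipschitz_gradient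
    (fun y hy ↦ hf_diff y hy.2) hN hf_smooth hx hx'
  have hconv := hf_conv.inner_gradient_sub_le hx.1 hz (hf_diff x hx.2)
  have hopt := hmin.inner_bregman_step_nonneg hC hx'.1 hz (hφ_diff x' hx'.2)
  have hstrong : α / 2 * N (x' - x) ^ 2 ≤ bregman φ x' x := by
    have := hφ_strong x hx x' hx'.1
    rw [bregman]
    linarith
  have hηL : η * L ≤ α := (le_div_iff₀ hL).1 hηα
  calc η * (f x' - f z)
      ≤ η * (⟪gradient f x, x' - x⟫ - ⟪gradient f x, z - x⟫ + L / 2 * N (x' - x) ^ 2) := by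
        gcongr
        linarith
    _ = -(η * ⟪gradient f x, z - x'⟫) + η * L / 2 * N (x' - x) ^ 2 := by
        simp only [inner_sub_right]
        ring
    _ ≤ ⟪gradient φ x' - gradient φ x, z - x'⟫ + α / 2 * N (x' - x) ^ 2 := by
        linarith [mul_le_mul_of_nonneg_right hηL (sq_nonneg (N (x' - x)))]
    _ ≤ bregman φ z x - bregman φ z x' := by
        rw [inner_gradient_sub_gradient_eq_bregman]
        linarith

theorem sub_le_div_sum_of_antitone {a b η : ℕ → ℝ} {c : ℝ} (ha : Antitone a)
    (hη : ∀ t, 0 < η t) (hstep : ∀ t, η t * (a (t + 1) - c) ≤ b t - b (t + 1)) {T : ℕ}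
    (hT : 1 ≤ T) : a T - c ≤ (b 0 - b T) / ∑ t ∈ range T, η t := by
  have hsum : 0 < ∑ t ∈ range T, η t := sum_pos (fun t _ ↦ hη t) (nonempty_range_iff.2 (by omega))
  rw [le_div_iff₀ hsum, ← sum_range_sub' b, mul_comm, sum_mul]
  refine sum_le_sum fun t ht ↦ le_trans ?_ (hstep t)
  gcongr
  · exact (hη t).le
  · exact ha (mem_range.1 ht)

end

theorem md_basic_inequality_general {d : ℕ}
    (C Om : Set (EuclideanSpace ℝ (Fin d)))
    (hCconv : Convex ℝ C) (hOmconv : Convex ℝ Om)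
    (f φ : EuclideanSpace ℝ (Fin d) → ℝ)
    (hf_conv : ConvexOn ℝ C f)
    (hf_diff : ∀ x ∈ interior Om, DifferentiableAt ℝ f x)
    -- a norm `N` on ℝ^d
    (N : EuclideanSpace ℝ (Fin d) → ℝ)
    (hN_smul : ∀ (c : ℝ) x, N (c • x) = |c| * N x)
    (hφ_diff : ∀ x ∈ interior Om, DifferentiableAt ℝ φ x)
    -- `f` is `L`-smooth w.r.t. `N` on `C ∩ int Om`, `φ` is `α`-strongly convex w.r.t. `N` on `C`
    (L α : ℝ) (hL : 0 < L) (hα : 0 < α)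
    (hf_smooth : ∀ x ∈ C ∩ interior Om, ∀ y ∈ C ∩ interior Om,
      ∀ u : EuclideanSpace ℝ (Fin d),
        ⟪gradient f x - gradient f y, u⟫ ≤ L * N (x - y) * N u)
    (hφ_strong : ∀ x ∈ C ∩ interior Om, ∀ y ∈ C,
      φ x + ⟪gradient φ x, y - x⟫ + α / 2 * N (y - x) ^ 2 ≤ φ y)
    -- Bregman divergence of `φ`
    (D : EuclideanSpace ℝ (Fin d) → EuclideanSpace ℝ (Fin d) → ℝ)
    (hD : ∀ u v, D u v = φ u - φ v - ⟪gradient φ v, u - v⟫)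
    -- mirror descent iterates with step sizes `η t ∈ (0, α/L]`
    (η : ℕ → ℝ) (hη : ∀ t, 0 < η t ∧ η t ≤ α / L)
    (θ : ℕ → EuclideanSpace ℝ (Fin d))
    (hθmem : ∀ t, θ t ∈ C ∩ interior Om)
    (hupd : ∀ t, ∀ w ∈ C,
      η t * ⟪gradient f (θ t), θ (t + 1)⟫ + D (θ (t + 1)) (θ t) ≤
        η t * ⟪gradient f (θ t), w⟫ + D w (θ t))
    (z : EuclideanSpace ℝ (Fin d)) (hz : z ∈ C) (T : ℕ) (hT : 1 ≤ T) :
    f (θ T) - f z ≤ (D z (θ 0) - D z (θ T)) / (∑ t ∈ Finset.range T, η t) := by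
  obtain rfl : D = bregman φ := funext₂ hD
  have hstep : ∀ t, ∀ w ∈ C,
      η t * (f (θ (t + 1)) - f w) ≤ bregman φ w (θ t) - bregman φ w (θ (t + 1)) :=
    fun t w hw ↦ mirror_step_le hCconv hOmconv.interior hf_conv hf_diff hφ_diff hN_smul hL
      hf_smooth hφ_strong (hη t).1.le (hη t).2 (hθmem t) (hθmem (t + 1)) hw
      (isMinOn_iff.2 (hupd t))
  have hanti : Antitone (f ∘ θ) := antitone_nat_of_succ_le fun t ↦ by
    have hdesc := hstep t (θ t) (hθmem t).1
    have hstrong := hφ_strong (θ (t + 1)) (hθmem (t + 1)) (θ t) (hθmem t).1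
    rw [bregman_self, bregman] at hdesc
    have : η t * (f (θ (t + 1)) - f (θ t)) ≤ 0 := by
      linarith [mul_nonneg hα.le (sq_nonneg (N (θ t - θ (t + 1))))]
    simpa using nonpos_of_mul_nonpos_right this (hη t).1
  exact sub_le_div_sum_of_antitone hanti (fun t ↦ (hη t).1) (fun t ↦ hstep t z hz) hT

/-- **Basic inequality for mirror descent.**
Let `C ⊆ Om` be closed convex subsets of `ℝ^d` with nonempty interiors, `f` convex on `C`
and differentiable on `int Om`, `φ` of Legendre type (essentially smooth: differentiable on
`int Om` with gradient blowing up at the boundary; and essentially strictly convex: strictly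
convex on every convex subset of the set where its subdifferential is nonempty) and
continuous on `Om`; `f` is `L`-smooth w.r.t. a norm `N` on `C ∩ int Om` (expressed via the
dual-norm inequality) and `φ` is `α`-strongly convex w.r.t. `N` on `C`. For mirror descent
iterates (minimizers of `η t * ⟪∇f θt, ·⟫ + D_φ(·, θt)` over `C`, remaining in `C ∩ int Om`)
with step sizes `η t ∈ (0, α/L]`, for any `z ∈ C` and `T ≥ 1`,
`f (θ T) - f z ≤ (D_φ(z, θ 0) - D_φ(z, θ T)) / Σ_{t<T} η t`. -/
theorem md_basic_inequality {d : ℕ}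
    (C Om : Set (EuclideanSpace ℝ (Fin d)))
    (hCOm : C ⊆ Om) (hCclosed : IsClosed C) (hCconv : Convex ℝ C)
    (hOmclosed : IsClosed Om) (hOmconv : Convex ℝ Om)
    (hCint : (interior C).Nonempty) (hOmint : (interior Om).Nonempty)
    (f φ : EuclideanSpace ℝ (Fin d) → ℝ)
    (hf_conv : ConvexOn ℝ C f)
    (hf_diff : ∀ x ∈ interior Om, DifferentiableAt ℝ f x)
    -- a norm `N` on ℝ^d
    (N : EuclideanSpace ℝ (Fin d) → ℝ)
    (hN_pos : ∀ x, x ≠ 0 → 0 < N x) (hN_zero : N 0 = 0)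
    (hN_add : ∀ x y, N (x + y) ≤ N x + N y)
    (hN_smul : ∀ (c : ℝ) x, N (c • x) = |c| * N x)
    -- `φ` is continuous on `Om`, convex, and of Legendre type
    (hφ_cont : ContinuousOn φ Om)
    (hφ_conv : ConvexOn ℝ Om φ)
    (hφ_diff : ∀ x ∈ interior Om, DifferentiableAt ℝ φ x)
    (hφ_ess_smooth : ∀ (x : ℕ → EuclideanSpace ℝ (Fin d)) (y : EuclideanSpace ℝ (Fin d)),
      (∀ k, x k ∈ interior Om) → y ∈ frontier Om → Tendsto x atTop (nhds y) →
        Tendsto (fun k => ‖gradient φ (x k)‖) atTop atTop)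
    (hφ_ess_strict : ∀ s ⊆ {x ∈ Om | ∃ g : EuclideanSpace ℝ (Fin d),
        ∀ y ∈ Om, φ x + ⟪g, y - x⟫ ≤ φ y}, Convex ℝ s → StrictConvexOn ℝ s φ)
    -- `f` is `L`-smooth w.r.t. `N` on `C ∩ int Om`, `φ` is `α`-strongly convex w.r.t. `N` on `C`
    (L α : ℝ) (hL : 0 < L) (hα : 0 < α)
    (hf_smooth : ∀ x ∈ C ∩ interior Om, ∀ y ∈ C ∩ interior Om,
      ∀ u : EuclideanSpace ℝ (Fin d),
        ⟪gradient f x - gradient f y, u⟫ ≤ L * N (x - y) * N u)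
    (hφ_strong : ∀ x ∈ C ∩ interior Om, ∀ y ∈ C,
      φ x + ⟪gradient φ x, y - x⟫ + α / 2 * N (y - x) ^ 2 ≤ φ y)
    -- Bregman divergence of `φ`
    (D : EuclideanSpace ℝ (Fin d) → EuclideanSpace ℝ (Fin d) → ℝ)
    (hD : ∀ u v, D u v = φ u - φ v - ⟪gradient φ v, u - v⟫)
    -- mirror descent iterates with step sizes `η t ∈ (0, α/L]`
    (η : ℕ → ℝ) (hη : ∀ t, 0 < η t ∧ η t ≤ α / L)
    (θ : ℕ → EuclideanSpace ℝ (Fin d))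
    (hθmem : ∀ t, θ t ∈ C ∩ interior Om)
    (hupd : ∀ t, ∀ w ∈ C,
      η t * ⟪gradient f (θ t), θ (t + 1)⟫ + D (θ (t + 1)) (θ t) ≤
        η t * ⟪gradient f (θ t), w⟫ + D w (θ t))
    (z : EuclideanSpace ℝ (Fin d)) (hz : z ∈ C) (T : ℕ) (hT : 1 ≤ T) :
    f (θ T) - f z ≤ (D z (θ 0) - D z (θ T)) / (∑ t ∈ Finset.range T, η t) :=
  md_basic_inequality_general C Om hCconv hOmconv f φ hf_conv hf_diff N hN_smul hφ_diff L α hL hα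
    hf_smooth hφ_strong D hD η hη θ hθmem hupd z hz T hT
end
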